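/- Let A,B > 0 and a,b,c,d ∈ ℝ, and suppose either (a,b,c are positive and d < 0) or (a,c are positive and b,d < 0). If f(t) := 1 − A t^a(1−t)^b − B t^c(1−t)^d has no degenerate roots in (0,1), then f has fewer than 6 roots in the open interval (0,1). -/

import Mathlib

/-!
In case B both terms of
`f' t = -A t^(a-1) (1-t)^(b-1) (a - (a+b) t) - B t^(c-1) (1-t)^(d-1) (c - (c+d) t)`
are negative on `(0,1)`, so `f` is strictly decreasing and has at most one root.

In case A the factor `c - (c+d) t` is positive, and dividing `f'` by the positive
`t^(c-1) (1-t)^(d-1) (c - (c+d) t)` leaves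
`φ t = A t^(a-c) (1-t)^(b-d) ((a+b) t - a) / (c - (c+d) t) - B` (`derivBalance`),
whose derivative is `A t^(a-c-1) (1-t)^(b-d-1) P(t) / (c - (c+d) t)^2` for a cubic `P`
(`balanceCubic`). `P` is not the zero polynomial: at `t = a/(a+b)` the factor `(a+b) t - a`
vanishes and `P` reduces to `(a+b) t (1-t) (c - (c+d) t) > 0`. Rolle's theorem, applied to `f`
and to `φ`, bounds the number of roots of `f` by `#{P = 0} + 2 ≤ 5`.
-/

open Real Set Polynomial

theorem encard_zeros_le_encard_deriv_zeros_add_one {s : Set ℝ} (hs : s.OrdConnected)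
    {f : ℝ → ℝ} (hf : ∀ x ∈ s, DifferentiableAt ℝ f x) :
    {x ∈ s | f x = 0}.encard ≤ {x ∈ s | deriv f x = 0}.encard + 1 := by
  rcases {x ∈ s | deriv f x = 0}.finite_or_infinite with hD | hD
  swap
  · simp [hD.encard_eq]
  by_contra! hlt
  obtain ⟨S, hSZ, hScard⟩ := exists_subset_encard_eq (Order.add_one_le_of_lt hlt)
  rw [hD.encard_eq_coe_toFinset_card] at hScard
  have hSfin : S.Finite :=
    finite_of_encard_eq_coe (k := hD.toFinset.card + 1 + 1) (by simpa using hScard)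
  have hinterleaved := Finset.card_le_of_interleaved (s := hSfin.toFinset) (t := hD.toFinset) ?_
  · rw [hSfin.encard_eq_coe_toFinset_card] at hScard
    norm_cast at hScard
    omega
  intro x hx y hy hxy _
  rw [Finite.mem_toFinset] at hx hy
  obtain ⟨hxs, hfx⟩ := hSZ hx
  obtain ⟨hys, hfy⟩ := hSZ hy
  have hIcc : Icc x y ⊆ s := hs.out hxs hys
  obtain ⟨z, hz, hfz⟩ := exists_deriv_eq_zero hxy
    (fun u hu => (hf u (hIcc hu)).continuousAt.continuousWithinAt) (hfx.trans hfy.symm)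
  exact ⟨z, by simpa using ⟨hIcc (Ioo_subset_Icc_self hz), hfz⟩, hz⟩

theorem encard_setOf_eval_eq_zero_le_natDegree {R : Type*} [CommRing R] [IsDomain R]
    {P : R[X]} (hP : P ≠ 0) (s : Set R) : {x ∈ s | P.eval x = 0}.encard ≤ P.natDegree := by
  classical
  calc {x ∈ s | P.eval x = 0}.encard ≤ (P.roots.toFinset : Set R).encard :=
        encard_le_encard fun x hx => by simpa [mem_roots hP] using hx.2
    _ ≤ P.natDegree := by
        rw [encard_coe_eq_coe_finsetCard]
        exact_mod_cast (Multiset.toFinset_card_le _).trans (card_roots' P)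

theorem zero_lt_sub_add_mul {a b t : ℝ} (ha : 0 < a) (hb : b ≤ 0) (ht : t ∈ Ioo (0 : ℝ) 1) :
    0 < a - (a + b) * t := by
  nlinarith [ht.1, ht.2]

theorem hasDerivAt_rpow_mul_one_sub_rpow (a b : ℝ) {t : ℝ} (ht : t ∈ Ioo (0 : ℝ) 1) :
    HasDerivAt (fun t => t ^ a * (1 - t) ^ b)
      (t ^ (a - 1) * (1 - t) ^ (b - 1) * (a - (a + b) * t)) t := by
  obtain ⟨ht0, ht1⟩ := ht
  have h1t : 0 < 1 - t := by linarith
  have hpow : HasDerivAt (fun t => t ^ a) (a * t ^ (a - 1)) t :=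
    hasDerivAt_rpow_const (Or.inl ht0.ne')
  have hpow' : HasDerivAt (fun t => (1 - t) ^ b) (b * (1 - t) ^ (b - 1) * (-1)) t :=
    (hasDerivAt_rpow_const (Or.inl h1t.ne')).comp t ((hasDerivAt_id t).const_sub 1)
  refine (hpow.mul hpow').congr_deriv ?_
  rw [rpow_sub_one ht0.ne', rpow_sub_one h1t.ne']
  field_simp
  ring

theorem rpow_mul_one_sub_rpow_pos (a b : ℝ) {t : ℝ} (ht : t ∈ Ioo (0 : ℝ) 1) :
    0 < t ^ a * (1 - t) ^ b :=
  mul_pos (rpow_pos_of_pos ht.1 a) (rpow_pos_of_pos (sub_pos.2 ht.2) b)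

noncomputable def twoTermFun (a b c d A B t : ℝ) : ℝ :=
  1 - A * t ^ a * (1 - t) ^ b - B * t ^ c * (1 - t) ^ d

theorem hasDerivAt_twoTermFun (a b c d A B : ℝ) {t : ℝ} (ht : t ∈ Ioo (0 : ℝ) 1) :
    HasDerivAt (twoTermFun a b c d A B)
      (-(A * (t ^ (a - 1) * (1 - t) ^ (b - 1) * (a - (a + b) * t)))
        - B * (t ^ (c - 1) * (1 - t) ^ (d - 1) * (c - (c + d) * t))) t := by
  unfold twoTermFun
  simpa only [mul_assoc] using
    (((hasDerivAt_rpow_mul_one_sub_rpow a b ht).const_mul A).const_sub 1).fun_sub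
      ((hasDerivAt_rpow_mul_one_sub_rpow c d ht).const_mul B)

theorem encard_twoTermFun_zeros_le_one {a b c d A B : ℝ} (hA : 0 < A) (hB : 0 < B)
    (ha : 0 < a) (hb : b ≤ 0) (hc : 0 < c) (hd : d ≤ 0) :
    {t ∈ Ioo (0 : ℝ) 1 | twoTermFun a b c d A B t = 0}.encard ≤ 1 := by
  have hderiv_neg : ∀ t ∈ Ioo (0 : ℝ) 1, deriv (twoTermFun a b c d A B) t < 0 := by
    intro t ht
    have hg : 0 < t ^ (a - 1) * (1 - t) ^ (b - 1) * (a - (a + b) * t) :=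
      mul_pos (rpow_mul_one_sub_rpow_pos _ _ ht) (zero_lt_sub_add_mul ha hb ht)
    have hh : 0 < t ^ (c - 1) * (1 - t) ^ (d - 1) * (c - (c + d) * t) :=
      mul_pos (rpow_mul_one_sub_rpow_pos _ _ ht) (zero_lt_sub_add_mul hc hd ht)
    rw [(hasDerivAt_twoTermFun a b c d A B ht).deriv]
    linarith [mul_pos hA hg, mul_pos hB hh]
  have hno_crit : {t ∈ Ioo (0 : ℝ) 1 | deriv (twoTermFun a b c d A B) t = 0} = ∅ :=
    eq_empty_of_forall_notMem fun t ht => (hderiv_neg t ht.1).ne ht.2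
  have hrolle := encard_zeros_le_encard_deriv_zeros_add_one ordConnected_Ioo
    fun t ht => (hasDerivAt_twoTermFun a b c d A B ht).differentiableAt
  rwa [hno_crit, encard_empty, zero_add] at hrolle

noncomputable def balanceCubic (a b c d : ℝ) : ℝ[X] :=
  (C (a - c) - C (a + b - c - d) * X) * (C (a + b) * X - C a) * (C c - C (c + d) * X)
    + X * (1 - X) * (C (a + b) * (C c - C (c + d) * X) + C (c + d) * (C (a + b) * X - C a))

theorem balanceCubic_eval (a b c d t : ℝ) :
    (balanceCubic a b c d).eval t =
      (a - c - (a + b - c - d) * t) * ((a + b) * t - a) * (c - (c + d) * t)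
        + t * (1 - t) * ((a + b) * (c - (c + d) * t) + (c + d) * ((a + b) * t - a)) := by
  simp [balanceCubic]

theorem balanceCubic_natDegree_le (a b c d : ℝ) : (balanceCubic a b c d).natDegree ≤ 3 := by
  unfold balanceCubic
  compute_degree

theorem balanceCubic_ne_zero {a b c d : ℝ} (ha : 0 < a) (hb : 0 < b) (hc : 0 < c) (hd : d ≤ 0) :
    balanceCubic a b c d ≠ 0 := by
  set t₀ := a / (a + b)
  have hab : 0 < a + b := by linarith
  have ht₀ : t₀ ∈ Ioo (0 : ℝ) 1 := ⟨by positivity, (div_lt_one hab).2 (by linarith)⟩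
  have hp : (a + b) * t₀ - a = 0 := by rw [mul_div_cancel₀ _ hab.ne', sub_self]
  intro h
  have heval := congrArg (eval t₀) h
  rw [balanceCubic_eval, hp, eval_zero] at heval
  simp only [mul_zero, zero_mul, zero_add, add_zero] at heval
  refine (mul_pos (mul_pos ht₀.1 (sub_pos.2 ht₀.2)) (mul_pos hab ?_)).ne' heval
  exact zero_lt_sub_add_mul hc hd ht₀

noncomputable def derivBalance (a b c d A B : ℝ) (t : ℝ) : ℝ :=
  A * (t ^ (a - c) * (1 - t) ^ (b - d)) * ((a + b) * t - a) / (c - (c + d) * t) - B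

theorem hasDerivAt_derivBalance (a b c d A B : ℝ) {t : ℝ} (ht : t ∈ Ioo (0 : ℝ) 1)
    (hq : c - (c + d) * t ≠ 0) :
    HasDerivAt (derivBalance a b c d A B)
      (A * t ^ (a - c - 1) * (1 - t) ^ (b - d - 1) * (balanceCubic a b c d).eval t
        / (c - (c + d) * t) ^ 2) t := by
  have hp : HasDerivAt (fun t => (a + b) * t - a) (a + b) t := by
    simpa using ((hasDerivAt_id t).const_mul (a + b)).sub_const a
  have hq' : HasDerivAt (fun t => c - (c + d) * t) (-(c + d)) t := by
    simpa using ((hasDerivAt_id t).const_mul (c + d)).const_sub c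
  refine (((((hasDerivAt_rpow_mul_one_sub_rpow (a - c) (b - d) ht).const_mul A).fun_mul hp).fun_div
    hq' hq).sub_const B).congr_deriv ?_
  have ht0 : t ≠ 0 := ht.1.ne'
  have h1t : 1 - t ≠ 0 := (sub_pos.2 ht.2).ne'
  rw [balanceCubic_eval, rpow_sub_one ht0, rpow_sub_one h1t]
  field_simp
  ring

theorem deriv_twoTermFun_eq_mul_derivBalance (a b c d A B : ℝ) {t : ℝ}
    (ht : t ∈ Ioo (0 : ℝ) 1) (hq : c - (c + d) * t ≠ 0) :
    deriv (twoTermFun a b c d A B) t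
      = t ^ (c - 1) * (1 - t) ^ (d - 1) * (c - (c + d) * t) * derivBalance a b c d A B t := by
  have h1t : 0 < 1 - t := sub_pos.2 ht.2
  have hsplit : ∀ {x : ℝ}, 0 < x → ∀ e e' : ℝ, x ^ (e - 1) = x ^ (e - e') * x ^ (e' - 1) :=
    fun hx e e' => by rw [← rpow_add hx]; ring_nf
  rw [(hasDerivAt_twoTermFun a b c d A B ht).deriv, derivBalance, hsplit ht.1 a c,
    hsplit h1t b d]
  set q := c - (c + d) * t
  field_simp
  ring

theorem encard_twoTermFun_zeros_le_five {a b c d A B : ℝ} (hA : A ≠ 0) (ha : 0 < a)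
    (hb : 0 < b) (hc : 0 < c) (hd : d ≤ 0) :
    {t ∈ Ioo (0 : ℝ) 1 | twoTermFun a b c d A B t = 0}.encard ≤ 5 := by
  set f := twoTermFun a b c d A B
  set φ := derivBalance a b c d A B
  set P := balanceCubic a b c d
  have hq : ∀ t ∈ Ioo (0 : ℝ) 1, 0 < c - (c + d) * t := fun t => zero_lt_sub_add_mul hc hd
  have hφ' := fun t (ht : t ∈ Ioo (0 : ℝ) 1) =>
    hasDerivAt_derivBalance a b c d A B ht (hq t ht).ne'
  have hf'_zero : {t ∈ Ioo (0 : ℝ) 1 | deriv f t = 0} ⊆ {t ∈ Ioo (0 : ℝ) 1 | φ t = 0} := by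
    rintro t ⟨ht, h0⟩
    refine ⟨ht, ?_⟩
    rw [deriv_twoTermFun_eq_mul_derivBalance a b c d A B ht (hq t ht).ne'] at h0
    exact (mul_eq_zero.1 h0).resolve_left
      (mul_pos (rpow_mul_one_sub_rpow_pos _ _ ht) (hq t ht)).ne'
  have hφ'_zero : {t ∈ Ioo (0 : ℝ) 1 | deriv φ t = 0} ⊆ {t ∈ Ioo (0 : ℝ) 1 | P.eval t = 0} := by
    rintro t ⟨ht, h0⟩
    refine ⟨ht, ?_⟩
    rw [(hφ' t ht).deriv] at h0
    have ht_pow := (rpow_pos_of_pos ht.1 (a - c - 1)).ne'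
    have h1t_pow := (rpow_pos_of_pos (sub_pos.2 ht.2) (b - d - 1)).ne'
    simpa [hA, ht_pow, h1t_pow, (hq t ht).ne'] using h0
  calc {t ∈ Ioo (0 : ℝ) 1 | f t = 0}.encard
      ≤ {t ∈ Ioo (0 : ℝ) 1 | deriv f t = 0}.encard + 1 :=
        encard_zeros_le_encard_deriv_zeros_add_one ordConnected_Ioo
          fun t ht => (hasDerivAt_twoTermFun a b c d A B ht).differentiableAt
    _ ≤ {t ∈ Ioo (0 : ℝ) 1 | φ t = 0}.encard + 1 :=
        add_le_add_left (encard_le_encard hf'_zero) 1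
    _ ≤ {t ∈ Ioo (0 : ℝ) 1 | deriv φ t = 0}.encard + 1 + 1 :=
        add_le_add_left (encard_zeros_le_encard_deriv_zeros_add_one ordConnected_Ioo
          fun t ht => (hφ' t ht).differentiableAt) 1
    _ ≤ {t ∈ Ioo (0 : ℝ) 1 | P.eval t = 0}.encard + 1 + 1 :=
        add_le_add_left (add_le_add_left (encard_le_encard hφ'_zero) 1) 1
    _ ≤ 3 + 1 + 1 := by
        gcongr
        exact (encard_setOf_eval_eq_zero_le_natDegree (balanceCubic_ne_zero ha hb hc hd) _).trans
          (by exact_mod_cast balanceCubic_natDegree_le a b c d)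
    _ = 5 := by norm_num

theorem fewer_than_six_roots_cases_AB_general
    (a b c d A B : ℝ) (hA : 0 < A) (hB : 0 < B)
    (hcase : (0 < a ∧ 0 < b ∧ 0 < c ∧ d < 0) ∨ (0 < a ∧ 0 < c ∧ b < 0 ∧ d < 0))
    (f : ℝ → ℝ)
    (hf : f = fun t : ℝ => 1 - A * t ^ a * (1 - t) ^ b - B * t ^ c * (1 - t) ^ d) :
    {t ∈ Set.Ioo (0 : ℝ) 1 | f t = 0}.encard < 6 := by
  obtain rfl : f = twoTermFun a b c d A B := hf
  rcases hcase with ⟨ha, hb, hc, hd⟩ | ⟨ha, hc, hb, hd⟩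
  · exact (encard_twoTermFun_zeros_le_five hA.ne' ha hb hc hd.le).trans_lt (by norm_num)
  · exact (encard_twoTermFun_zeros_le_one hA hB ha hb.le hc hd.le).trans_lt (by norm_num)

/-- Cases A and B: either `a, b, c > 0` and `d < 0`, or `a, c > 0` and `b, d < 0`.
If `f(t) = 1 − A t^a (1−t)^b − B t^c (1−t)^d` has no degenerate roots in `(0,1)`
(a root `ζ` is degenerate if `f ζ = 0` and `f' ζ = 0`), then `f` has fewer than 6
roots in `(0,1)`.  (`^` is `Real.rpow`.) -/
theorem fewer_than_six_roots_cases_AB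
    (a b c d A B : ℝ) (hA : 0 < A) (hB : 0 < B)
    (hcase : (0 < a ∧ 0 < b ∧ 0 < c ∧ d < 0) ∨ (0 < a ∧ 0 < c ∧ b < 0 ∧ d < 0))
    (f : ℝ → ℝ)
    (hf : f = fun t : ℝ => 1 - A * t ^ a * (1 - t) ^ b - B * t ^ c * (1 - t) ^ d)
    (hnd : ∀ t ∈ Set.Ioo (0 : ℝ) 1, f t = 0 → deriv f t ≠ 0) :
    {t ∈ Set.Ioo (0 : ℝ) 1 | f t = 0}.encard < 6 :=
  fewer_than_six_roots_cases_AB_general a b c d A B hA hB hcase f hf
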